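/- Let r ≥ 2, let F̂ be any r-pattern of K_k, and let G be an (r,F̂)-extremal graph that is not a complete multipartite graph. Then for any three vertices u, v, w of G with uv ∉ E(G), uw ∉ E(G) and vw ∈ E(G), the graph obtained from G by deleting the edge vw is still (r,F̂)-extremal. -/

import Mathlib

/-!
Fix the coloring `b` of the pairs avoiding `T = {u, v, w}` and count its `p`-free extensions.
Since `u` is adjacent to neither `v` nor `w`, no clique contains `u` together with `v` or `w`,
so the colors at `u` and at `{v, w}` can be chosen independently. Replacing `v` by a twin of
`u`, or `u` by a twin of `v`, cannot increase the number of colorings; summing over `b`, the two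
inequalities force the numbers of extensions at `u` and at `v` to agree for every `b`, and
likewise for `u` and `w`. Writing `a(b)` and `s(b)` for the numbers of extensions at `u` and at
`w`, this gives `c(G) = ∑ a² s` and `c(G - vw) = ∑ a s²`, while the graph in which `v` and `w`
both become twins of `u` has `∑ a³` colorings. Extremality of `G` gives `∑ a³ ≤ ∑ a² s`, and
Cauchy–Schwarz, `(∑ a² s)² ≤ (∑ a³)(∑ a s²)`, turns this into `c(G) ≤ c(G - vw)`.
-/

open SimpleGraph

/-- A (not necessarily proper) `r`-edge-coloring of a graph `G`, encoded as a symmetric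
function on ordered pairs of vertices whose value on non-adjacent pairs is pinned to `0`. -/
def IsEdgeColoring {V : Type*} {r : ℕ} (G : SimpleGraph V) (c : V → V → Fin r) : Prop :=
  (∀ u v, c u v = c v u) ∧ ∀ u v, ¬ G.Adj u v → (c u v).1 = 0

/-- The coloring `c` of `G` contains a copy of the pattern `p` of the complete graph `K_k`
with all vertices inside the set `A`: there is an injective map `f` of `Fin k` into `A`
whose image is a clique of `G` and such that two edges of the copy get equal colors
exactly when the corresponding edges of `K_k` lie in the same class of the pattern. -/
def ContainsPatternOn {V : Type*} {k r s : ℕ} (G : SimpleGraph V) (A : Set V)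
    (p : Fin k → Fin k → Fin s) (c : V → V → Fin r) : Prop :=
  ∃ f : Fin k → V, (∀ i, f i ∈ A) ∧ Function.Injective f ∧
    (∀ i j, i ≠ j → G.Adj (f i) (f j)) ∧
    ∀ i j i' j', i ≠ j → i' ≠ j' →
      (c (f i) (f j) = c (f i') (f j') ↔ p i j = p i' j')

/-- The coloring `c` of `G` contains a copy of the pattern `p`. -/
def ContainsPattern {V : Type*} {k r s : ℕ} (G : SimpleGraph V)
    (p : Fin k → Fin k → Fin s) (c : V → V → Fin r) : Prop :=
  ContainsPatternOn G Set.univ p c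

/-- `c_{r,p}(G)`: the number of `p`-free `r`-edge-colorings of `G`. -/
noncomputable def colCount {V : Type*} {k s : ℕ} (r : ℕ) (p : Fin k → Fin k → Fin s)
    (G : SimpleGraph V) : ℕ :=
  Nat.card {c : V → V → Fin r // IsEdgeColoring G c ∧ ¬ ContainsPattern G p c}

/-- `G` is `(r,p)`-extremal: it admits at least as many `p`-free `r`-edge-colorings as any
graph on the same number of vertices. -/
def IsExtremalGraph {V : Type*} [Fintype V] {k s : ℕ} (r : ℕ)
    (p : Fin k → Fin k → Fin s) (G : SimpleGraph V) : Prop :=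
  ∀ H : SimpleGraph (Fin (Fintype.card V)), colCount r p H ≤ colCount r p G

/-- `G` is a complete multipartite graph: vertices can be partitioned (into the fibers
of some map `f`) so that two vertices are adjacent iff they lie in different parts. -/
def IsCompleteMultipartiteGraph {V : Type*} (G : SimpleGraph V) : Prop :=
  ∃ f : V → V, ∀ u v, G.Adj u v ↔ f u ≠ f v

namespace PatternColoring

variable {V W : Type*} {k r s : ℕ}

noncomputable def restrictCompl [NeZero r] (S : Set V) (c : V → V → Fin r) : V → V → Fin r :=
  open scoped Classical in fun a b => if a ∈ S ∨ b ∈ S then 0 else c a b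

def isolate (Γ : SimpleGraph V) (S : Set V) : SimpleGraph V where
  Adj a b := Γ.Adj a b ∧ a ∉ S ∧ b ∉ S
  symm := ⟨fun _ _ h => ⟨h.1.symm, h.2.2, h.2.1⟩⟩
  loopless := ⟨fun _ h => Γ.irrefl h.1⟩

def IsFreeColoring (p : Fin k → Fin k → Fin s) (Γ : SimpleGraph V) (c : V → V → Fin r) : Prop :=
  IsEdgeColoring Γ c ∧ ¬ ContainsPattern Γ p c

noncomputable def extensionCount [NeZero r] (p : Fin k → Fin k → Fin s) (Γ : SimpleGraph V)
    (S : Set V) (b : V → V → Fin r) : ℕ :=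
  Nat.card {c : V → V → Fin r // IsFreeColoring p Γ c ∧ restrictCompl S c = b}

section restrictCompl

variable [NeZero r] {S S' : Set V} {c : V → V → Fin r} {a b : V}

lemma restrictCompl_of_mem (h : a ∈ S ∨ b ∈ S) : restrictCompl S c a b = 0 := by
  simp [restrictCompl, h]

lemma restrictCompl_of_notMem (ha : a ∉ S) (hb : b ∉ S) : restrictCompl S c a b = c a b := by
  simp [restrictCompl, ha, hb]

lemma restrictCompl_restrictCompl (h : S ⊆ S') :
    restrictCompl S' (restrictCompl S c) = restrictCompl S' c := by
  funext a b
  by_cases hab : a ∈ S' ∨ b ∈ S'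
  · simp only [restrictCompl_of_mem hab]
  · obtain ⟨ha, hb⟩ := not_or.1 hab
    rw [restrictCompl_of_notMem ha hb, restrictCompl_of_notMem ha hb,
      restrictCompl_of_notMem (fun ha' => ha (h ha')) (fun hb' => hb (h hb'))]

lemma restrictCompl_comp (e : V → V) (he : ∀ x ∉ S, e x = x)
    (c : V → V → Fin r) : restrictCompl S (fun a b => c (e a) (e b)) = restrictCompl S c := by
  funext a b
  by_cases h : a ∈ S ∨ b ∈ S
  · simp only [restrictCompl_of_mem h]
  · obtain ⟨ha, hb⟩ := not_or.1 h
    simp only [restrictCompl_of_notMem ha hb, he a ha, he b hb]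

end restrictCompl

section isolate

variable {Γ Γ' : SimpleGraph V} {S S' : Set V}

@[simp]
lemma isolate_adj {a b : V} : (isolate Γ S).Adj a b ↔ Γ.Adj a b ∧ a ∉ S ∧ b ∉ S := Iff.rfl

lemma isolate_le : isolate Γ S ≤ Γ := fun _ _ h => h.1

lemma isolate_isolate : isolate (isolate Γ S) S' = isolate Γ (S ∪ S') := by
  ext a b
  simp only [isolate_adj, Set.mem_union]
  tauto

lemma isolate_congr (h : ∀ a b, a ∉ S → b ∉ S → (Γ.Adj a b ↔ Γ'.Adj a b)) :
    isolate Γ S = isolate Γ' S := by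
  ext a b
  simp only [isolate_adj]
  exact ⟨fun ⟨hab, ha, hb⟩ => ⟨(h a b ha hb).1 hab, ha, hb⟩,
    fun ⟨hab, ha, hb⟩ => ⟨(h a b ha hb).2 hab, ha, hb⟩⟩

lemma isolate_deleteEdges_of_mem {v w : V} (h : v ∈ S ∨ w ∈ S) :
    isolate (Γ.deleteEdges {s(v, w)}) S = isolate Γ S :=
  isolate_congr fun a b ha hb => by
    simp only [deleteEdges_adj, Set.mem_singleton_iff, Sym2.eq_iff]
    refine and_iff_left ?_
    rintro (⟨rfl, rfl⟩ | ⟨rfl, rfl⟩) <;> tauto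

end isolate

section IsEdgeColoring

variable [NeZero r] {Γ : SimpleGraph V} {S : Set V} {c : V → V → Fin r}

lemma _root_.IsEdgeColoring.eq_zero (hc : IsEdgeColoring Γ c) {a b : V} (h : ¬ Γ.Adj a b) :
    c a b = 0 :=
  Fin.ext (hc.2 a b h)

lemma _root_.IsEdgeColoring.eq_zero_of_mem (hc : IsEdgeColoring (isolate Γ S) c) {a b : V}
    (h : a ∈ S ∨ b ∈ S) : c a b = 0 :=
  hc.eq_zero fun hab => h.elim hab.2.1 hab.2.2

lemma _root_.IsEdgeColoring.restrictCompl_isolate (hc : IsEdgeColoring Γ c) :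
    IsEdgeColoring (isolate Γ S) (restrictCompl S c) := by
  refine ⟨fun a b => ?_, fun a b hab => ?_⟩
  · by_cases h : a ∈ S ∨ b ∈ S
    · rw [restrictCompl_of_mem h, restrictCompl_of_mem h.symm]
    · obtain ⟨ha, hb⟩ := not_or.1 h
      rw [restrictCompl_of_notMem ha hb, restrictCompl_of_notMem hb ha, hc.1]
  · by_cases h : a ∈ S ∨ b ∈ S
    · simp [restrictCompl_of_mem h]
    · obtain ⟨ha, hb⟩ := not_or.1 h
      rw [restrictCompl_of_notMem ha hb]
      exact hc.2 a b fun hab' => hab ⟨hab', ha, hb⟩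

end IsEdgeColoring

section ContainsPattern

variable {Γ : SimpleGraph V} {Γ' : SimpleGraph W} {p : Fin k → Fin k → Fin s}

lemma _root_.ContainsPattern.map {c : V → V → Fin r} {c' : W → W → Fin r} (g : Γ →g Γ')
    (hg : Function.Injective g) (hc : ∀ a b, Γ.Adj a b → c' (g a) (g b) = c a b)
    (h : ContainsPattern Γ p c) : ContainsPattern Γ' p c' := by
  obtain ⟨f, -, hinj, hadj, hpat⟩ := h
  refine ⟨g ∘ f, fun _ => trivial, hg.comp hinj, fun i j hij => g.map_adj (hadj i j hij),
    fun i j i' j' hij hij' => ?_⟩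
  simp only [Function.comp_apply, hc _ _ (hadj i j hij), hc _ _ (hadj i' j' hij')]
  exact hpat i j i' j' hij hij'

lemma _root_.ContainsPatternOn.isolate {S : Set V} {c c' : V → V → Fin r}
    (h : ContainsPatternOn Γ Sᶜ p c) (hc : ∀ a b, a ∉ S → b ∉ S → c' a b = c a b) :
    ContainsPattern (isolate Γ S) p c' := by
  obtain ⟨f, hS, hinj, hadj, hpat⟩ := h
  refine ⟨f, fun _ => trivial, hinj, fun i j hij => ⟨hadj i j hij, hS i, hS j⟩,
    fun i j i' j' hij hij' => ?_⟩
  rw [hc _ _ (hS i) (hS j), hc _ _ (hS i') (hS j')]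
  exact hpat i j i' j' hij hij'

lemma _root_.ContainsPattern.containsPatternOn_compl_or {S₁ S₂ : Set V} {c : V → V → Fin r}
    (hdisj : Disjoint S₁ S₂) (hadj : ∀ a ∈ S₁, ∀ b ∈ S₂, ¬ Γ.Adj a b)
    (h : ContainsPattern Γ p c) : ContainsPatternOn Γ S₁ᶜ p c ∨ ContainsPatternOn Γ S₂ᶜ p c := by
  obtain ⟨f, -, hinj, hcl, hpat⟩ := h
  by_cases h₂ : ∃ i, f i ∈ S₂
  · obtain ⟨i₀, hi₀⟩ := h₂
    refine Or.inl ⟨f, fun i hi => ?_, hinj, hcl, hpat⟩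
    rcases eq_or_ne i i₀ with rfl | hii
    · exact Set.disjoint_left.1 hdisj hi hi₀
    · exact hadj _ hi _ hi₀ (hcl i i₀ hii)
  · exact Or.inr ⟨f, fun i => (not_exists.1 h₂) i, hinj, hcl, hpat⟩

lemma IsFreeColoring.comp_iso {c : W → W → Fin r} (e : Γ ≃g Γ')
    (hc : IsFreeColoring p Γ' c) : IsFreeColoring p Γ (fun a b => c (e a) (e b)) :=
  ⟨⟨fun _ _ => hc.1.1 _ _, fun _ _ hab => hc.1.2 _ _ (e.map_adj_iff.not.2 hab)⟩,
    fun h => hc.2 (h.map e.toHom e.injective fun _ _ _ => rfl)⟩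

lemma IsFreeColoring.restrictCompl_isolate [NeZero r] {S : Set V} {c : V → V → Fin r}
    (hc : IsFreeColoring p Γ c) : IsFreeColoring p (isolate Γ S) (restrictCompl S c) :=
  ⟨hc.1.restrictCompl_isolate, fun h => hc.2 (h.map (Hom.ofLE isolate_le) Function.injective_id
    fun _ _ hab => (restrictCompl_of_notMem hab.2.1 hab.2.2).symm)⟩

lemma colCount_congr {Γ : SimpleGraph V} {Γ' : SimpleGraph W} (e : Γ ≃g Γ') :
    colCount r p Γ = colCount r p Γ' :=
  Nat.card_congr
    { toFun := fun c => ⟨fun a b => c.1 (e.symm a) (e.symm b), IsFreeColoring.comp_iso e.symm c.2⟩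
      invFun := fun c => ⟨fun a b => c.1 (e a) (e b), IsFreeColoring.comp_iso e c.2⟩
      left_inv := fun c => by ext; simp
      right_inv := fun c => by ext; simp }

end ContainsPattern

section Counting

variable [NeZero r] {p : Fin k → Fin k → Fin s}

lemma natCard_eq_sum_natCard_fiber {α β : Type*} [Finite α] [Fintype β] (P : α → Prop)
    (f : α → β) : Nat.card {a // P a} = ∑ b, Nat.card {a // P a ∧ f a = b} := by
  rw [← Nat.card_sigma]
  exact Nat.card_congr ⟨fun a => ⟨f a, a, a.2, rfl⟩, fun x => ⟨x.2.1, x.2.2.1⟩, fun _ => rfl,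
    by rintro ⟨_, _, _, rfl⟩; rfl⟩

lemma extensionCount_congr {Γ Γ' : SimpleGraph V} {S : Set V} (e : Γ ≃g Γ')
    (he : ∀ x ∉ S, e x = x) (b : V → V → Fin r) :
    extensionCount p Γ S b = extensionCount p Γ' S b := by
  have he' : ∀ x ∉ S, e.symm x = x := fun x hx => e.toEquiv.symm_apply_eq.2 (he x hx).symm
  exact Nat.card_congr
    { toFun := fun c => ⟨fun a b => c.1 (e.symm a) (e.symm b),
        IsFreeColoring.comp_iso e.symm c.2.1, by rw [restrictCompl_comp _ he', c.2.2]⟩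
      invFun := fun c => ⟨fun a b => c.1 (e a) (e b),
        IsFreeColoring.comp_iso e c.2.1, by rw [restrictCompl_comp _ he, c.2.2]⟩
      left_inv := fun c => by ext; simp
      right_inv := fun c => by ext; simp }

variable [Fintype V] [DecidableEq V]

lemma colCount_eq_sum_extensionCount (Γ : SimpleGraph V) (S : Set V) :
    colCount r p Γ = ∑ b : V → V → Fin r, extensionCount p Γ S b :=
  natCard_eq_sum_natCard_fiber _ (restrictCompl S)

lemma extensionCount_eq_sum_ite {S S' : Set V} (h : S ⊆ S') (Γ : SimpleGraph V)
    (b : V → V → Fin r) : extensionCount p Γ S' b =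
      ∑ b', if restrictCompl S' b' = b then extensionCount p Γ S b' else 0 := by
  rw [extensionCount, natCard_eq_sum_natCard_fiber _ (restrictCompl S)]
  refine Finset.sum_congr rfl fun b' _ => ?_
  split_ifs with hb'
  · refine Nat.card_congr (Equiv.subtypeEquivRight fun c => ⟨fun h' => ⟨h'.1.1, h'.2⟩, ?_⟩)
    rintro ⟨hc, rfl⟩
    exact ⟨⟨hc, by rw [← hb', restrictCompl_restrictCompl h]⟩, rfl⟩
  · rw [Nat.card_eq_zero]
    refine Or.inl ⟨?_⟩
    rintro ⟨c, ⟨-, rfl⟩, rfl⟩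
    exact hb' (restrictCompl_restrictCompl h)

end Counting

noncomputable def glue (S : Set V) (c₁ c₂ : V → V → Fin r) : V → V → Fin r :=
  open scoped Classical in fun a b => if a ∈ S ∨ b ∈ S then c₂ a b else c₁ a b

section Glue

variable {Γ : SimpleGraph V} {S₁ S₂ : Set V} {c c₁ c₂ : V → V → Fin r}

lemma glue_of_notMem {a b : V} (ha : a ∉ S₂) (hb : b ∉ S₂) : glue S₂ c₁ c₂ a b = c₁ a b := by
  simp [glue, ha, hb]

lemma glue_of_mem {a b : V} (h : a ∈ S₂ ∨ b ∈ S₂) : glue S₂ c₁ c₂ a b = c₂ a b := by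
  simp [glue, h]

variable [NeZero r]

lemma glue_of_notMem_left (hagree : restrictCompl (S₁ ∪ S₂) c₁ = restrictCompl (S₁ ∪ S₂) c₂)
    {a b : V} (ha : a ∉ S₁) (hb : b ∉ S₁) : glue S₂ c₁ c₂ a b = c₂ a b := by
  by_cases h : a ∈ S₂ ∨ b ∈ S₂
  · exact glue_of_mem h
  · obtain ⟨ha₂, hb₂⟩ := not_or.1 h
    have := congrFun₂ hagree a b
    rw [glue_of_notMem ha₂ hb₂]
    rwa [restrictCompl_of_notMem (by simp [ha, ha₂]) (by simp [hb, hb₂]),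
      restrictCompl_of_notMem (by simp [ha, ha₂]) (by simp [hb, hb₂])] at this

lemma glue_restrictCompl (hdisj : Disjoint S₁ S₂) (hadj : ∀ a ∈ S₁, ∀ b ∈ S₂, ¬ Γ.Adj a b)
    (hc : IsEdgeColoring Γ c) : glue S₂ (restrictCompl S₂ c) (restrictCompl S₁ c) = c := by
  funext a b
  by_cases h₂ : a ∈ S₂ ∨ b ∈ S₂
  · rw [glue_of_mem h₂]
    by_cases h₁ : a ∈ S₁ ∨ b ∈ S₁
    · rw [restrictCompl_of_mem h₁, hc.eq_zero]
      rcases h₁ with h₁ | h₁ <;> rcases h₂ with h₂ | h₂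
      · exact (Set.disjoint_left.1 hdisj h₁ h₂).elim
      · exact hadj a h₁ b h₂
      · exact fun hab => hadj b h₁ a h₂ hab.symm
      · exact (Set.disjoint_left.1 hdisj h₁ h₂).elim
    · exact restrictCompl_of_notMem (not_or.1 h₁).1 (not_or.1 h₁).2
  · obtain ⟨ha, hb⟩ := not_or.1 h₂
    rw [glue_of_notMem ha hb, restrictCompl_of_notMem ha hb]

lemma restrictCompl_glue_left (hc₁ : IsEdgeColoring (isolate Γ S₂) c₁) :
    restrictCompl S₂ (glue S₂ c₁ c₂) = c₁ := by
  funext a b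
  by_cases h : a ∈ S₂ ∨ b ∈ S₂
  · rw [restrictCompl_of_mem h, hc₁.eq_zero_of_mem h]
  · obtain ⟨ha, hb⟩ := not_or.1 h
    rw [restrictCompl_of_notMem ha hb, glue_of_notMem ha hb]

lemma restrictCompl_glue_right (hc₂ : IsEdgeColoring (isolate Γ S₁) c₂)
    (hagree : restrictCompl (S₁ ∪ S₂) c₁ = restrictCompl (S₁ ∪ S₂) c₂) :
    restrictCompl S₁ (glue S₂ c₁ c₂) = c₂ := by
  funext a b
  by_cases h : a ∈ S₁ ∨ b ∈ S₁
  · rw [restrictCompl_of_mem h, hc₂.eq_zero_of_mem h]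
  · obtain ⟨ha, hb⟩ := not_or.1 h
    rw [restrictCompl_of_notMem ha hb, glue_of_notMem_left hagree ha hb]

lemma isFreeColoring_glue {p : Fin k → Fin k → Fin s} (hdisj : Disjoint S₁ S₂)
    (hadj : ∀ a ∈ S₁, ∀ b ∈ S₂, ¬ Γ.Adj a b) (hc₁ : IsFreeColoring p (isolate Γ S₂) c₁)
    (hc₂ : IsFreeColoring p (isolate Γ S₁) c₂)
    (hagree : restrictCompl (S₁ ∪ S₂) c₁ = restrictCompl (S₁ ∪ S₂) c₂) :
    IsFreeColoring p Γ (glue S₂ c₁ c₂) := by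
  refine ⟨⟨fun a b => ?_, fun a b hab => ?_⟩, fun h => ?_⟩
  · by_cases h : a ∈ S₂ ∨ b ∈ S₂
    · rw [glue_of_mem h, glue_of_mem h.symm, hc₂.1.1]
    · rw [glue_of_notMem (not_or.1 h).1 (not_or.1 h).2,
        glue_of_notMem (not_or.1 h).2 (not_or.1 h).1, hc₁.1.1]
  · by_cases h : a ∈ S₂ ∨ b ∈ S₂
    · rw [glue_of_mem h]; exact hc₂.1.2 a b fun h' => hab h'.1
    · rw [glue_of_notMem (not_or.1 h).1 (not_or.1 h).2]; exact hc₁.1.2 a b fun h' => hab h'.1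
  · rcases h.containsPatternOn_compl_or hdisj hadj with h | h
    · exact hc₂.2 (h.isolate fun a b ha hb => (glue_of_notMem_left hagree ha hb).symm)
    · exact hc₁.2 (h.isolate fun a b ha hb => (glue_of_notMem ha hb).symm)

end Glue

section Product

variable [NeZero r] {p : Fin k → Fin k → Fin s} {Γ : SimpleGraph V}

/-- A clique cannot meet both `S₁` and `S₂`, so the colors at the two sets are chosen
independently. -/
lemma extensionCount_union_eq_mul {S₁ S₂ : Set V} (hdisj : Disjoint S₁ S₂)
    (hadj : ∀ a ∈ S₁, ∀ b ∈ S₂, ¬ Γ.Adj a b) (b : V → V → Fin r) :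
    extensionCount p Γ (S₁ ∪ S₂) b =
      extensionCount p (isolate Γ S₂) (S₁ ∪ S₂) b *
        extensionCount p (isolate Γ S₁) (S₁ ∪ S₂) b := by
  rw [extensionCount, extensionCount, extensionCount, ← Nat.card_prod]
  exact Nat.card_congr
    { toFun := fun c =>
        (⟨restrictCompl S₂ c.1, c.2.1.restrictCompl_isolate,
          by rw [restrictCompl_restrictCompl Set.subset_union_right, c.2.2]⟩,
         ⟨restrictCompl S₁ c.1, c.2.1.restrictCompl_isolate,
          by rw [restrictCompl_restrictCompl Set.subset_union_left, c.2.2]⟩)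
      invFun := fun x =>
        ⟨glue S₂ x.1.1 x.2.1,
          isFreeColoring_glue hdisj hadj x.1.2.1 x.2.2.1 (x.1.2.2.trans x.2.2.2.symm),
          by rw [← restrictCompl_restrictCompl Set.subset_union_right,
            restrictCompl_glue_left x.1.2.1.1, x.1.2.2]⟩
      left_inv := fun c => Subtype.ext (glue_restrictCompl hdisj hadj c.2.1.1)
      right_inv := fun x => Prod.ext (Subtype.ext (restrictCompl_glue_left x.1.2.1.1))
        (Subtype.ext (restrictCompl_glue_right x.2.2.1.1 (x.1.2.2.trans x.2.2.2.symm))) }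

lemma extensionCount_insert_eq_mul {x : V} {S : Set V} (hx : x ∉ S)
    (hadj : ∀ y ∈ S, ¬ Γ.Adj x y) (b : V → V → Fin r) :
    extensionCount p Γ (insert x S) b =
      extensionCount p (isolate Γ S) (insert x S) b *
        extensionCount p (isolate Γ {x}) (insert x S) b := by
  simpa only [Set.singleton_union] using extensionCount_union_eq_mul (S₁ := {x}) (S₂ := S)
    (p := p) (Set.disjoint_singleton_left.2 hx) (by simpa using hadj) b

end Product

section Twin

variable [DecidableEq V] {Γ : SimpleGraph V} {x y : V} {S : Set V}

/-- `Γ` with `x` turned into a non-adjacent twin of `y`. -/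
def twin (Γ : SimpleGraph V) (x y : V) : SimpleGraph V :=
  Γ.comap (Function.update id x y)

lemma twin_adj {a b : V} :
    (twin Γ x y).Adj a b ↔ Γ.Adj (Function.update id x y a) (Function.update id x y b) :=
  Iff.rfl

lemma isolate_twin_of_mem (hx : x ∈ S) : isolate (twin Γ x y) S = isolate Γ S :=
  isolate_congr fun a b ha hb => by
    rw [twin_adj, Function.update_of_ne (ne_of_mem_of_not_mem hx ha).symm,
      Function.update_of_ne (ne_of_mem_of_not_mem hx hb).symm, id, id]

lemma update_id_eq_swap {a : V} (ha : a ≠ y) : Function.update id x y a = Equiv.swap x y a := by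
  rcases eq_or_ne a x with rfl | hax
  · simp
  · rw [Function.update_of_ne hax, Equiv.swap_apply_of_ne_of_ne hax ha, id]

lemma swap_mem_insert_iff (hx : x ∉ S) (hy : y ∉ S) {a : V} :
    Equiv.swap x y a ∈ insert x S ↔ a ∈ insert y S := by
  rcases eq_or_ne a x with rfl | hax
  · simp [hx, hy, eq_comm]
  rcases eq_or_ne a y with rfl | hay
  · simp
  · simp [Equiv.swap_apply_of_ne_of_ne hax hay, hax, hay]

def isolateTwinIso (hx : x ∉ S) (hy : y ∉ S) :
    isolate (twin Γ x y) (insert y S) ≃g isolate Γ (insert x S) where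
  toEquiv := Equiv.swap x y
  map_rel_iff' {a b} := by
    simp only [isolate_adj, swap_mem_insert_iff hx hy]
    refine and_congr_left fun h => ?_
    rw [twin_adj, update_id_eq_swap (ne_of_mem_of_not_mem (Set.mem_insert y S) h.1).symm,
      update_id_eq_swap (ne_of_mem_of_not_mem (Set.mem_insert y S) h.2).symm]

lemma extensionCount_isolate_twin [NeZero r] {p : Fin k → Fin k → Fin s} {T : Set V}
    (hx : x ∉ S) (hy : y ∉ S) (hxT : x ∈ T) (hyT : y ∈ T) (b : V → V → Fin r) :
    extensionCount p (isolate (twin Γ x y) (insert y S)) T b =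
      extensionCount p (isolate Γ (insert x S)) T b :=
  extensionCount_congr (isolateTwinIso hx hy) (fun _ hz => Equiv.swap_apply_of_ne_of_ne
    (ne_of_mem_of_not_mem hxT hz).symm (ne_of_mem_of_not_mem hyT hz).symm) b

end Twin

section Inequalities

variable {ι : Type*} [Fintype ι]

lemma eq_of_sum_sq_le_sum_mul {A M : ι → ℕ} (h₁ : ∑ i, A i ^ 2 ≤ ∑ i, A i * M i)
    (h₂ : ∑ i, M i ^ 2 ≤ ∑ i, A i * M i) : A = M := by
  have hle : ∀ i ∈ Finset.univ, 2 * A i * M i ≤ A i ^ 2 + M i ^ 2 :=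
    fun i _ => two_mul_le_add_sq _ _
  have hsum : ∑ i, 2 * A i * M i = ∑ i, (A i ^ 2 + M i ^ 2) := by
    refine le_antisymm (Finset.sum_le_sum hle) ?_
    simp only [Finset.sum_add_distrib, mul_assoc, ← Finset.mul_sum]
    omega
  funext i
  have hi : ((A i : ℤ) - M i) ^ 2 = 0 := by
    have := (Finset.sum_eq_sum_iff_of_le hle).1 hsum i (Finset.mem_univ i)
    zify at this
    linear_combination -this
  exact_mod_cast sub_eq_zero.1 (pow_eq_zero_iff two_ne_zero |>.1 hi)

lemma sum_sq_mul_le_sum_mul_sq {a s : ι → ℕ} (h : ∑ i, a i ^ 3 ≤ ∑ i, a i ^ 2 * s i) :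
    ∑ i, a i ^ 2 * s i ≤ ∑ i, a i * s i ^ 2 := by
  have hcs : (∑ i, a i ^ 2 * s i) ^ 2 ≤ (∑ i, a i ^ 3) * ∑ i, a i * s i ^ 2 :=
    Finset.sum_sq_le_sum_mul_sum_of_sq_le_mul _ (fun _ _ => Nat.zero_le _)
      (fun _ _ => Nat.zero_le _) fun i _ => le_of_eq (by ring)
  rcases Nat.eq_zero_or_pos (∑ i, a i ^ 2 * s i) with h0 | h0
  · exact h0 ▸ Nat.zero_le _
  · refine Nat.le_of_mul_le_mul_left ?_ h0
    calc (∑ i, a i ^ 2 * s i) * ∑ i, a i ^ 2 * s i = (∑ i, a i ^ 2 * s i) ^ 2 := (sq _).symm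
      _ ≤ (∑ i, a i ^ 3) * ∑ i, a i * s i ^ 2 := hcs
      _ ≤ (∑ i, a i ^ 2 * s i) * ∑ i, a i * s i ^ 2 := Nat.mul_le_mul_right _ h

end Inequalities

lemma _root_.IsExtremalGraph.colCount_le [Fintype V] {p : Fin k → Fin k → Fin s}
    {G : SimpleGraph V} (hG : IsExtremalGraph r p G) (Γ : SimpleGraph V) :
    colCount r p Γ ≤ colCount r p G :=
  (colCount_congr (Iso.comap (Fintype.equivFin V).symm Γ)).symm.le.trans (hG _)

section Extremal

variable [NeZero r] [Fintype V] [DecidableEq V] {p : Fin k → Fin k → Fin s} {G : SimpleGraph V}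
  {x y : V}

lemma sum_sq_extensionCount_le (hle : ∀ Γ : SimpleGraph V, colCount r p Γ ≤ colCount r p G)
    (hxy : x ≠ y) (hadj : ¬ G.Adj x y) :
    ∑ b : V → V → Fin r, extensionCount p (isolate G {x}) {x, y} b ^ 2 ≤
      ∑ b : V → V → Fin r, extensionCount p (isolate G {x}) {x, y} b *
        extensionCount p (isolate G {y}) {x, y} b := by
  have hsplit : ∀ Γ : SimpleGraph V, ¬ Γ.Adj x y → colCount r p Γ = ∑ b : V → V → Fin r,
      extensionCount p (isolate Γ {y}) {x, y} b * extensionCount p (isolate Γ {x}) {x, y} b :=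
    fun Γ h => (colCount_eq_sum_extensionCount Γ {x, y}).trans <| Finset.sum_congr rfl
      fun b _ => extensionCount_insert_eq_mul (by simpa using hxy) (by simpa using h) b
  have htwin : ∀ b : V → V → Fin r, extensionCount p (isolate (twin G x y) {y}) {x, y} b =
      extensionCount p (isolate G {x}) {x, y} b := by
    simpa using extensionCount_isolate_twin (Γ := G) (p := p) (S := ∅) (T := {x, y})
      (Set.notMem_empty x) (Set.notMem_empty y) (by simp) (by simp)
  have := hle (twin G x y)
  rw [hsplit _ (by simp [twin_adj, Function.update_apply]), hsplit _ hadj,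
    isolate_twin_of_mem (Set.mem_singleton x)] at this
  simpa only [htwin, sq, mul_comm] using this

lemma extensionCount_isolate_eq_of_not_adj
    (hle : ∀ Γ : SimpleGraph V, colCount r p Γ ≤ colCount r p G) (hxy : x ≠ y)
    (hadj : ¬ G.Adj x y) {T : Set V} (hT : {x, y} ⊆ T) (b : V → V → Fin r) :
    extensionCount p (isolate G {x}) T b = extensionCount p (isolate G {y}) T b := by
  have h₂ := sum_sq_extensionCount_le hle hxy.symm fun h => hadj h.symm
  rw [Set.pair_comm] at h₂
  have hpair := congrFun <| eq_of_sum_sq_le_sum_mul (sum_sq_extensionCount_le hle hxy hadj)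
    (by simpa only [mul_comm] using h₂)
  simp only [extensionCount_eq_sum_ite hT, hpair]

end Extremal

section Triple

variable [NeZero r] [DecidableEq V] {p : Fin k → Fin k → Fin s} {G : SimpleGraph V} {u v w : V}

lemma extensionCount_isolate_eq_mul (huv : u ≠ v) (huw : u ≠ w) (hadj : ¬ G.Adj u w)
    (b : V → V → Fin r) :
    extensionCount p (isolate G {v}) {u, v, w} b = extensionCount p (isolate G {v, w}) {u, v, w} b *
      extensionCount p (isolate G {v, u}) {u, v, w} b := by
  have := extensionCount_insert_eq_mul (Γ := isolate G {v}) (x := u) (S := {v, w}) (p := p)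
    (by simp [huv, huw]) (by simp [hadj]) b
  rwa [isolate_isolate, isolate_isolate, Set.singleton_union, Set.singleton_union,
    Set.insert_eq_of_mem (Set.mem_insert v {w})] at this

lemma extensionCount_twin_twin (huv : u ≠ v) (huw : u ≠ w) (hvw : v ≠ w) (b : V → V → Fin r) :
    extensionCount p (twin (twin G v u) w u) {u, v, w} b =
      extensionCount p (isolate G {v, w}) {u, v, w} b ^ 3 := by
  set C := twin (twin G v u) w u
  have hC : ∀ a ∈ ({u, v, w} : Set V), ∀ a' ∈ ({u, v, w} : Set V), ¬ C.Adj a a' := by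
    simp only [Set.mem_insert_iff, Set.mem_singleton_iff]
    rintro a (rfl | rfl | rfl) a' (rfl | rfl | rfl) <;>
      simp [C, twin_adj, huv, huw, hvw]
  have hCu : extensionCount p (isolate C {u}) {u, v, w} b =
      extensionCount p (isolate C {u, w}) {u, v, w} b *
        extensionCount p (isolate C {u, v}) {u, v, w} b := by
    have := extensionCount_insert_eq_mul (Γ := isolate C {u}) (x := v) (S := {u, w}) (p := p)
      (by simp [huv.symm, hvw])
      (fun z hz h => hC v (by simp) z (Set.insert_subset_insert (by simp) hz) h.1) b
    rwa [Set.insert_comm v u {w}, isolate_isolate, isolate_isolate, Set.singleton_union,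
      Set.singleton_union, Set.insert_eq_of_mem (Set.mem_insert u {w})] at this
  have hCuw : extensionCount p (isolate C {u, w}) {u, v, w} b =
      extensionCount p (isolate G {v, w}) {u, v, w} b := by
    rw [isolate_twin_of_mem (by simp)]
    exact extensionCount_isolate_twin (by simpa using hvw) (by simpa using huw) (by simp)
      (by simp) b
  have hCuv : extensionCount p (isolate C {u, v}) {u, v, w} b =
      extensionCount p (isolate G {v, w}) {u, v, w} b := by
    rw [extensionCount_isolate_twin (by simpa using hvw.symm) (by simpa using huv) (by simp)
      (by simp), isolate_twin_of_mem (by simp), Set.pair_comm w v]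
  rw [extensionCount_insert_eq_mul (by simp [huv, huw])
      (fun z hz => hC u (by simp) z (Set.subset_insert u _ hz)),
    isolate_twin_of_mem (by simp), isolate_twin_of_mem (by simp), hCu, hCuw, hCuv]
  ring

lemma extensionCount_eq_of_colCount_le [Fintype V]
    (hle : ∀ Γ : SimpleGraph V, colCount r p Γ ≤ colCount r p G) (huv : ¬ G.Adj u v)
    (huw : ¬ G.Adj u w) (huv' : u ≠ v) (huw' : u ≠ w) (hvw' : v ≠ w) (b : V → V → Fin r) :
    extensionCount p G {u, v, w} b = extensionCount p (isolate G {v, w}) {u, v, w} b ^ 2 *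
        extensionCount p (isolate G {v, u}) {u, v, w} b ∧
      extensionCount p (G.deleteEdges {s(v, w)}) {u, v, w} b =
        extensionCount p (isolate G {v, w}) {u, v, w} b *
          extensionCount p (isolate G {v, u}) {u, v, w} b ^ 2 := by
  have hv := extensionCount_isolate_eq_mul huv' huw' huw b (p := p)
  have hw := extensionCount_isolate_eq_mul huw' huv' huv b (p := p)
  rw [Set.pair_comm w v] at hw
  have hu_v := extensionCount_isolate_eq_of_not_adj hle huv' huv (T := {u, v, w})
    (Set.insert_subset_insert (by simp)) b
  have hu_w := extensionCount_isolate_eq_of_not_adj hle huw' huw (T := {u, v, w})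
    (Set.insert_subset_insert (by simp)) b
  have hG' := extensionCount_insert_eq_mul (Γ := G.deleteEdges {s(v, w)}) (x := v)
    (S := {u, w}) (p := p) (by simp [huv'.symm, hvw']) (by simp [G.adj_comm v u, huv]) b
  rw [Set.insert_comm v u {w}, isolate_deleteEdges_of_mem (by simp),
    isolate_deleteEdges_of_mem (by simp), Set.pair_comm u w] at hG'
  constructor
  · rw [extensionCount_insert_eq_mul (by simp [huv', huw']) (by simp [huv, huw]), hu_v, hv]
    ring
  · have hsym := (hw.symm.trans (hu_w.symm.trans hu_v)).trans hv
    rw [hG', hv]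
    linear_combination extensionCount p (isolate G {v, u}) {u, v, w} b * hsym

end Triple

end PatternColoring

open PatternColoring

theorem statement7_general {V : Type*} [Fintype V] (r k : ℕ) (hr : 2 ≤ r)
    (p : Fin k → Fin k → Fin r)
    (G : SimpleGraph V) (hext : IsExtremalGraph r p G)
    (u v w : V) (huv : ¬ G.Adj u v) (huw : ¬ G.Adj u w) (hvw : G.Adj v w) :
    IsExtremalGraph r p (G.deleteEdges {s(v, w)}) := by
  classical
  have : NeZero r := ⟨by omega⟩
  have hle := hext.colCount_le
  have huv' : u ≠ v := fun h => huw (h ▸ hvw)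
  have huw' : u ≠ w := fun h => huv (h ▸ hvw.symm)
  have hcounts := extensionCount_eq_of_colCount_le hle huv huw huv' huw' hvw.ne
  have hcube := hle (twin (twin G v u) w u)
  simp only [colCount_eq_sum_extensionCount _ {u, v, w},
    extensionCount_twin_twin huv' huw' hvw.ne, (hcounts _).1] at hcube
  refine fun H => (hext H).trans ?_
  simpa only [colCount_eq_sum_extensionCount _ {u, v, w}, (hcounts _).1, (hcounts _).2]
    using sum_sq_mul_le_sum_mul_sq hcube

/-- Edge deletion lemma: if `G` is `(r,p)`-extremal but not complete multipartite, then for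
any vertices `u, v, w` with `uv ∉ E(G)`, `uw ∉ E(G)` and `vw ∈ E(G)`, deleting the edge
`vw` yields a graph that is still `(r,p)`-extremal. -/
theorem statement7 {V : Type*} [Fintype V] (r k : ℕ) (hr : 2 ≤ r) (hk : 3 ≤ k)
    (p : Fin k → Fin k → Fin r) (hpsymm : ∀ i j, p i j = p j i)
    (G : SimpleGraph V) (hext : IsExtremalGraph r p G)
    (hnotmulti : ¬ IsCompleteMultipartiteGraph G)
    (u v w : V) (huv : ¬ G.Adj u v) (huw : ¬ G.Adj u w) (hvw : G.Adj v w) :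
    IsExtremalGraph r p (G.deleteEdges {s(v, w)}) :=
  statement7_general r k hr p G hext u v w huv huw hvw
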